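/- For every real α with 0 < α < 1 and every real β with 0 ≤ β ≤ min(2α, 2(1-α)), it holds that f^FF(α,β) ≤ 0, with equality if and only if β = 2α(1-α). In particular, for fixed α the function β ↦ f^FF(α,β) attains its maximum value 0 at β = 2α(1-α). -/
import Mathlib


/-- Binary entropy function with natural logarithm (`Real.log 0 = 0` gives `H 0 = H 1 = 0`). -/
noncomputable def H (x : ℝ) : ℝ := -x * Real.log x - (1 - x) * Real.log (1 - x)

/-- Asymptotic input-output weight distribution of the 2-state feedforward encoder `[3]_8`. -/
noncomputable def fFF (α β : ℝ) : ℝ :=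
  (1 - α) * H (β / (2 * (1 - α))) + α * H (β / (2 * α)) - H α

lemma mul_log_div (x y : ℝ) (hy : y ≠ 0) :
    x * Real.log (x / y) = x * (Real.log x - Real.log y) := by
  rcases eq_or_ne x 0 with h | h
  · simp [h]
  · rw [Real.log_div h hy]

lemma scaled (c x y A B : ℝ) (hc : c ≠ 0) :
    c * (-(x / c) * A - y / c * B) = -(x * A) - y * B := by
  field_simp

lemma key_le (p q : ℝ) (hp : 0 ≤ p) (hq : 0 < q) :
    p * (Real.log q - Real.log p) ≤ q - p := by
  rcases eq_or_lt_of_le hp with h | h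
  · simp [← h, hq.le]
  · have hqp : 0 < q / p := div_pos hq h
    have := Real.log_le_sub_one_of_pos hqp
    have h2 : Real.log q - Real.log p = Real.log (q / p) := (Real.log_div hq.ne' h.ne').symm
    rw [h2]
    calc p * Real.log (q / p) ≤ p * (q / p - 1) := by nlinarith
      _ = q - p := by field_simp

lemma key_eq (p q : ℝ) (hp : 0 ≤ p) (hq : 0 < q)
    (h : p * (Real.log q - Real.log p) = q - p) : p = q := by
  rcases eq_or_lt_of_le hp with h0 | h0
  · exfalso; rw [← h0] at h; simp at h; linarith
  · by_contra hne
    have hqp : 0 < q / p := div_pos hq h0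
    have hne1 : q / p ≠ 1 := by
      intro h1
      exact hne ((div_eq_one_iff_eq h0.ne').mp h1).symm
    have hlt := Real.log_lt_sub_one_of_pos hqp hne1
    have h2 : Real.log q - Real.log p = Real.log (q / p) := (Real.log_div hq.ne' h0.ne').symm
    rw [h2] at h
    have hstrict : p * Real.log (q / p) < p * (q / p - 1) := by nlinarith
    have h3 : p * (q / p - 1) = q - p := by field_simp
    linarith

theorem stmt_3 (α β : ℝ) (hα0 : 0 < α) (hα1 : α < 1)
    (hβ0 : 0 ≤ β) (hβu : β ≤ min (2 * α) (2 * (1 - α))) :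
    fFF α β ≤ 0 ∧ (fFF α β = 0 ↔ β = 2 * α * (1 - α)) := by
  set t : ℝ := β / 2 with ht
  have h1α : (0:ℝ) < 1 - α := by linarith
  have ht0 : 0 ≤ t := by positivity
  have htα : t ≤ α := by
    have := le_trans hβu (min_le_left _ _); linarith
  have ht1α : t ≤ 1 - α := by
    have := le_trans hβu (min_le_right _ _); linarith
  -- rewrite fFF as a sum of three KL-type terms
  have hident : fFF α β =
      2 * (t * (Real.log (α * (1 - α)) - Real.log t))
      + (α - t) * (Real.log (α ^ 2) - Real.log (α - t))
      + (1 - α - t) * (Real.log ((1 - α) ^ 2) - Real.log (1 - α - t)) := by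
    have e1 : β / (2 * (1 - α)) = t / (1 - α) := by rw [ht]; field_simp
    have e2 : β / (2 * α) = t / α := by rw [ht]; field_simp
    have e3 : 1 - t / (1 - α) = (1 - α - t) / (1 - α) := by field_simp
    have e4 : 1 - t / α = (α - t) / α := by field_simp
    have l1 : t * Real.log (t / (1 - α)) = t * (Real.log t - Real.log (1 - α)) :=
      mul_log_div _ _ h1α.ne'
    have l2 : t * Real.log (t / α) = t * (Real.log t - Real.log α) :=
      mul_log_div _ _ hα0.ne'
    have l3 : (1 - α - t) * Real.log ((1 - α - t) / (1 - α))
        = (1 - α - t) * (Real.log (1 - α - t) - Real.log (1 - α)) :=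
      mul_log_div _ _ h1α.ne'
    have l4 : (α - t) * Real.log ((α - t) / α)
        = (α - t) * (Real.log (α - t) - Real.log α) :=
      mul_log_div _ _ hα0.ne'
    have e5 : Real.log (α * (1 - α)) = Real.log α + Real.log (1 - α) :=
      Real.log_mul hα0.ne' h1α.ne'
    have e6 : Real.log (α ^ 2) = 2 * Real.log α := by
      rw [Real.log_pow]; push_cast; ring
    have e7 : Real.log ((1 - α) ^ 2) = 2 * Real.log (1 - α) := by
      rw [Real.log_pow]; push_cast; ring
    simp only [fFF, H, e1, e2, e3, e4]
    rw [scaled _ _ _ _ _ h1α.ne', scaled _ _ _ _ _ hα0.ne', l1, l2, l3, l4, e5, e6, e7]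
    ring
  have hq1 : (0:ℝ) < α * (1 - α) := by positivity
  have hq2 : (0:ℝ) < α ^ 2 := by positivity
  have hq3 : (0:ℝ) < (1 - α) ^ 2 := by positivity
  have hp2 : 0 ≤ α - t := by linarith
  have hp3 : 0 ≤ 1 - α - t := by linarith
  have b1 := key_le t (α * (1 - α)) ht0 hq1
  have b2 := key_le (α - t) (α ^ 2) hp2 hq2
  have b3 := key_le (1 - α - t) ((1 - α) ^ 2) hp3 hq3
  have hsum0 : 2 * (α * (1 - α) - t) + (α ^ 2 - (α - t)) + ((1 - α) ^ 2 - (1 - α - t)) = 0 := by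
    ring
  constructor
  · rw [hident]; nlinarith
  constructor
  · intro hf
    rw [hident] at hf
    -- each inequality must be tight
    have t1 : t * (Real.log (α * (1 - α)) - Real.log t) = α * (1 - α) - t := by nlinarith
    have := key_eq t (α * (1 - α)) ht0 hq1 t1
    rw [ht] at this; linarith
  · intro hb
    have htv : t = α * (1 - α) := by rw [ht, hb]; ring
    rw [hident, htv,
      show α - α * (1 - α) = α ^ 2 from by ring,
      show 1 - α - α * (1 - α) = (1 - α) ^ 2 from by ring]
    ring
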